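/- Let M be a quasi-projective right R-module and E = End(M). For g ∈ E, the right ideal gE is a direct summand of E_E if and only if g(M) is a direct summand of M. -/

import Mathlib

/-!
Both conditions say that the summand in question is cut out by an idempotent. A principal right
ideal of a ring is a direct summand exactly when it is `eS` for an idempotent `e`; in `E`,
`gE = eE` forces `g(M) = e(M)`, which is complemented by `ker e`. Conversely, quasi-projectivity
lifts the projection of `M` onto `g(M)` through `g : M → g(M)` to some `k`, and the idempotent
`g k` generates `gE`.
-/

open Submodule LinearMap Function

/-- `M` is quasi-projective: for every epimorphism `f : M → L` and homomorphism
`h : M → L` there is `k : M → M` with `f ∘ k = h`. -/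
def QuasiProjective (S : Type u) [Ring S] (M : Type v) [AddCommGroup M]
    [Module S M] : Prop :=
  ∀ (L : Type v) [AddCommGroup L] [Module S L] (f : M →ₗ[S] L),
    Function.Surjective f → ∀ h : M →ₗ[S] L, ∃ k : M →ₗ[S] M, f ∘ₗ k = h

section RightIdeal

variable {S : Type*} [Ring S]

lemma mem_span_singleton_mop {g x : S} :
    x ∈ span Sᵐᵒᵖ {g} ↔ ∃ a : S, g * a = x := by
  rw [mem_span_singleton]
  exact ⟨fun ⟨c, hc⟩ ↦ ⟨c.unop, hc⟩, fun ⟨a, ha⟩ ↦ ⟨MulOpposite.op a, ha⟩⟩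

lemma span_singleton_mop_eq_of_mul_eq {g e a b : S} (ha : g * a = e) (hb : e * b = g) :
    span Sᵐᵒᵖ {g} = span Sᵐᵒᵖ {e} :=
  le_antisymm
    ((span_singleton_le_iff_mem _ _).mpr (mem_span_singleton_mop.mpr ⟨b, hb⟩))
    ((span_singleton_le_iff_mem _ _).mpr (mem_span_singleton_mop.mpr ⟨a, ha⟩))

lemma range_moduleEndSelfOp (e : S) :
    range (RingEquiv.moduleEndSelfOp S e) = span Sᵐᵒᵖ {e} := by
  ext x
  rw [mem_span_singleton_mop]
  rfl

theorem exists_isCompl_span_singleton_mop_iff {g : S} :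
    (∃ K : Submodule Sᵐᵒᵖ S, IsCompl (span Sᵐᵒᵖ {g}) K) ↔
      ∃ e : S, IsIdempotentElem e ∧ span Sᵐᵒᵖ {g} = span Sᵐᵒᵖ {e} := by
  constructor
  · rintro ⟨K, hK⟩
    -- The projection onto `gS` along `K` is right `S`-linear, hence left multiplication by `P 1`.
    set P := (span Sᵐᵒᵖ {g}).projection K hK
    have hP : ∀ x, P x = P 1 * x := fun x ↦ by
      simpa using P.map_smul (MulOpposite.op x) 1
    obtain ⟨a, ha⟩ := mem_span_singleton_mop.mp (projection_apply_mem hK 1)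
    refine ⟨P 1, ?_, span_singleton_mop_eq_of_mul_eq ha (b := g) ?_⟩
    · rw [IsIdempotentElem, ← hP, projection_apply_of_mem_left hK (projection_apply_mem hK 1)]
    · rw [← hP, projection_apply_of_mem_left hK (mem_span_singleton_self g)]
  · rintro ⟨e, he, hge⟩
    exact ⟨_, hge ▸ range_moduleEndSelfOp e ▸ (he.map (RingEquiv.moduleEndSelfOp S)).isCompl⟩

end RightIdeal

section Endomorphism

variable {A M : Type*} [Ring A] [AddCommGroup M] [Module A M]

lemma range_le_of_mem_span_singleton_mop {f g : Module.End A M}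
    (hf : f ∈ span (Module.End A M)ᵐᵒᵖ {g}) : range f ≤ range g := by
  obtain ⟨a, rfl⟩ := mem_span_singleton_mop.mp hf
  exact range_comp_le_range a g

lemma range_eq_of_span_singleton_mop_eq {f g : Module.End A M}
    (h : span (Module.End A M)ᵐᵒᵖ {f} = span (Module.End A M)ᵐᵒᵖ {g}) : range f = range g :=
  le_antisymm (range_le_of_mem_span_singleton_mop (h ▸ mem_span_singleton_self f))
    (range_le_of_mem_span_singleton_mop (h ▸ mem_span_singleton_self g))

end Endomorphism

lemma QuasiProjective.exists_isIdempotentElem_span_singleton_mop_eq {A M : Type*} [Ring A]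
    [AddCommGroup M] [Module A M] (hqp : QuasiProjective A M) {g : Module.End A M}
    {L : Submodule A M} (hL : IsCompl (range g) L) :
    ∃ e : Module.End A M, IsIdempotentElem e ∧
      span (Module.End A M)ᵐᵒᵖ {g} = span (Module.End A M)ᵐᵒᵖ {e} := by
  obtain ⟨k, hk⟩ := hqp _ g.rangeRestrict g.surjective_rangeRestrict (projectionOnto _ L hL)
  have hgk : g * k = (range g).projection L hL := by
    rw [projection, ← hk]
    rfl
  refine ⟨g * k, hgk ▸ isIdempotentElem_projection hL,
    span_singleton_mop_eq_of_mul_eq rfl (b := g) ?_⟩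
  ext x
  rw [hgk, Module.End.mul_apply, projection_apply_of_mem_left hL (mem_range_self g x)]

/-- For a quasi-projective right `R`-module `M` with `E = End(M)` and `g ∈ E`:
`gE` is a direct summand of `E_E` iff `g(M)` is a direct summand of `M`. -/
theorem stmt_18 {R : Type*} [Ring R]
    {M : Type v} [AddCommGroup M] [Module Rᵐᵒᵖ M]
    (hqp : QuasiProjective Rᵐᵒᵖ M)
    (g : Module.End Rᵐᵒᵖ M) :
    (∃ K : Submodule (Module.End Rᵐᵒᵖ M)ᵐᵒᵖ (Module.End Rᵐᵒᵖ M),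
        IsCompl (Submodule.span (Module.End Rᵐᵒᵖ M)ᵐᵒᵖ {g}) K) ↔
    (∃ L : Submodule Rᵐᵒᵖ M, IsCompl (LinearMap.range (g : M →ₗ[Rᵐᵒᵖ] M)) L) := by
  rw [exists_isCompl_span_singleton_mop_iff]
  constructor
  · rintro ⟨e, he, hge⟩
    exact ⟨_, range_eq_of_span_singleton_mop_eq hge ▸ he.isCompl⟩
  · rintro ⟨L, hL⟩
    exact hqp.exists_isIdempotentElem_span_singleton_mop_eq hL
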